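/- arXiv:1511.06484 — 2 statements merged into one kernel-verified Lean document; each statement's English description precedes it below -/
import Mathlib

section
/- Fix d ≥ 1 and let (a_m) be the eventually quasipolynomial sequence of the main construction. For m = 3dn + r > 3d+2 with r ≡ 0 (mod 3), writing ℓ = r/3, one has a_{m−a_{m−1}} + a_{m−a_{m−2}} = p_{d,ℓ-1}(n) + p_{d,ℓ}(n−1) = p_{d,ℓ}(n), assuming a_j takes the claimed values for all j < m. -/
/-- Binomial coefficient `C(x, j)` extended polynomially in the (integer) upper argument. -/
def pbinom (x : ℤ) (j : ℕ) : ℤ := (∏ i ∈ Finset.range j, (x - i)) / (Nat.factorial j : ℤ)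

/-- `p_{d,k}(n) = 3d·C(n+k, 1+k) + Σ_{i=1}^{k} (3i+2)·C(n-1+k-i, k-i)`. -/
def hp (d k n : ℤ) : ℤ :=
  3 * d * pbinom (n + k) (1 + k).toNat
    + ∑ i ∈ Finset.Icc 1 k.toNat, (3 * (i : ℤ) + 2) * pbinom (n - 1 + k - (i : ℤ)) (k.toNat - i)

/-- The sequence of the main construction, with `a j = 0` for `j ≤ 0`. -/
def hseq (d : ℤ) (m : ℤ) : ℤ :=
  if m ≤ 0 then 0
  else if m = 1 then 3 * d - 2
  else if m = 2 then 0
  else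
    if (m % (3 * d)) % 3 = 0 then hp d ((m % (3 * d)) / 3) (m / (3 * d))
    else if (m % (3 * d)) % 3 = 1 then 3 * d
    else if m % (3 * d) = 3 * d - 1 then 2
    else 3

lemma pbinom_eq (x : ℤ) (j : ℕ) : pbinom x j = Ring.choose x j := by
  have hprod : ∏ i ∈ Finset.range j, (x - i) = (descPochhammer ℤ j).eval x := by
    induction j with
    | zero => simp
    | succ n ih => rw [Finset.prod_range_succ, ih, descPochhammer_succ_eval]
  have h := Ring.descPochhammer_eq_factorial_smul_choose x j
  rw [Polynomial.eval_eq_smeval] at hprod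
  unfold pbinom
  rw [hprod, h, nsmul_eq_mul, Int.mul_ediv_cancel_left]
  exact_mod_cast (Nat.factorial_ne_zero j)

lemma pbinom_zero (x : ℤ) : pbinom x 0 = 1 := by simp [pbinom]
lemma pbinom_one (x : ℤ) : pbinom x 1 = x := by simp [pbinom]
lemma pbinom_pascal (x : ℤ) (j : ℕ) : pbinom (x+1) (j+1) = pbinom x j + pbinom x (j+1) := by
  simp [pbinom_eq, Ring.choose_succ_succ]

def hpN (d : ℤ) (k : ℕ) (n : ℤ) : ℤ :=
  3 * d * pbinom (n + k) (k+1) + ∑ i ∈ Finset.range k, (3*((k:ℤ) - i) + 2) * pbinom (n - 1 + i) i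

lemma hp_eq_hpN (d : ℤ) (k : ℕ) (n : ℤ) : hp d (k:ℤ) n = hpN d k n := by
  unfold hp hpN
  have ht : (1 + (k:ℤ)).toNat = k + 1 := by omega
  rw [ht, Int.toNat_natCast]
  congr 1
  refine Finset.sum_bij' (fun a _ => k - a) (fun a _ => k - a) ?_ ?_ ?_ ?_ ?_
  · intro a ha
    simp only [Finset.mem_Icc] at ha
    simp only [Finset.mem_range]; omega
  · intro a ha
    simp only [Finset.mem_range] at ha
    simp only [Finset.mem_Icc]; omega
  · intro a ha
    simp only [Finset.mem_Icc] at ha; omega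
  · intro a ha
    simp only [Finset.mem_range] at ha; omega
  · intro a ha
    simp only [Finset.mem_Icc] at ha
    have h3 : ((k - a : ℕ) : ℤ) = (k:ℤ) - a := by omega
    rw [h3]
    congr 2 <;> omega

lemma hpN_rec (d : ℤ) (k : ℕ) (n : ℤ) : hpN d k n + hpN d (k+1) (n-1) = hpN d (k+1) n := by
  unfold hpN
  push_cast
  rw [Finset.sum_range_succ', Finset.sum_range_succ']
  push_cast
  have c1 : ∀ x ∈ Finset.range k, (3 * ((k:ℤ) + 1 - ((x:ℤ) + 1)) + 2) * pbinom (n - 1 - 1 + ((x:ℤ) + 1)) (x + 1)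
      = (3 * ((k:ℤ) - x) + 2) * pbinom (n - 1 + x) (x+1) := by
    intro x _
    have h : n - 1 - 1 + ((x:ℤ) + 1) = n - 1 + x := by ring
    rw [h]; ring
  have c2 : ∀ x ∈ Finset.range k, (3 * ((k:ℤ) + 1 - ((x:ℤ) + 1)) + 2) * pbinom (n - 1 + ((x:ℤ) + 1)) (x + 1)
      = (3 * ((k:ℤ) - x) + 2) * pbinom (n - 1 + x) x + (3 * ((k:ℤ) - x) + 2) * pbinom (n - 1 + x) (x+1) := by
    intro x _
    have h : n - 1 + ((x:ℤ) + 1) = (n - 1 + x) + 1 := by ring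
    rw [h, pbinom_pascal]; ring
  rw [Finset.sum_congr rfl c1, Finset.sum_congr rfl c2, Finset.sum_add_distrib]
  have h1 : n + ((k:ℤ) + 1) = (n + k) + 1 := by ring
  have h2 : n - 1 + ((k:ℤ) + 1) = n + k := by ring
  rw [h1, h2, pbinom_pascal, pbinom_zero, pbinom_zero]
  ring

lemma hp_neg_one (d n : ℤ) : hp d (-1) n = 3 * d := by
  have h1 : ((1:ℤ) + -1).toNat = 0 := rfl
  have h2 : ((-1:ℤ)).toNat = 0 := rfl
  simp [hp, h1, h2, pbinom_zero]

lemma hp_zero (d n : ℤ) : hp d 0 n = 3 * d * n := by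
  have h1 : ((1:ℤ) + 0).toNat = 1 := rfl
  simp [hp, h1, pbinom_one]

lemma hp_rec (d : ℤ) (k : ℕ) (n : ℤ) :
    hp d ((k:ℤ) - 1) n + hp d (k:ℤ) (n - 1) = hp d (k:ℤ) n := by
  cases k with
  | zero =>
    have h1 : ((0:ℕ):ℤ) - 1 = -1 := by norm_num
    rw [h1, hp_neg_one]
    push_cast
    rw [hp_zero, hp_zero]
    ring
  | succ j =>
    have h : ((j+1:ℕ):ℤ) - 1 = (j:ℤ) := by push_cast; ring
    rw [h, hp_eq_hpN d j n, hp_eq_hpN d (j+1) (n-1), hp_eq_hpN d (j+1) n]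
    exact hpN_rec d j n

lemma hseq_mod (d m s q : ℤ) (hd : 1 ≤ d) (h : m = 3*d*q + s) (h0 : 0 ≤ s) (h1 : s < 3*d) :
    m % (3*d) = s ∧ m / (3*d) = q := by
  subst h
  constructor
  · rw [add_comm, Int.add_mul_emod_self_left, Int.emod_eq_of_lt h0 h1]
  · rw [add_comm, Int.add_mul_ediv_left _ _ (by omega : (3*d) ≠ 0),
      Int.ediv_eq_zero_of_lt h0 h1, zero_add]

theorem hseq_case_zero (d : ℤ) (hd : 1 ≤ d) (n r m : ℤ) (hr0 : 0 ≤ r) (hr : r < 3 * d)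
    (hm : m = 3 * d * n + r) (hbig : 3 * d + 2 < m) (h3 : r % 3 = 0) :
    hseq d (m - hseq d (m - 1)) + hseq d (m - hseq d (m - 2))
        = hp d (r / 3 - 1) n + hp d (r / 3) (n - 1)
    ∧ hp d (r / 3 - 1) n + hp d (r / 3) (n - 1) = hp d (r / 3) n := by
  have hk0 : 0 ≤ r / 3 := Int.ediv_nonneg hr0 (by norm_num)
  have hkc : (((r/3).toNat : ℕ) : ℤ) = r/3 := Int.toNat_of_nonneg hk0
  refine ⟨?_, by rw [← hkc]; exact hp_rec d (r/3).toNat n⟩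
  -- sequence values
  have hmD : m - 3*d = 3*d*(n-1) + r := by rw [hm]; ring
  by_cases hrz : r = 0
  · -- r = 0 case
    subst hrz
    have hn2 : 2 ≤ n := by nlinarith
    have hgap : 3 ≤ 3*d*(n-1) := by nlinarith
    have em1 := hseq_mod d (m-1) (3*d-1) (n-1) hd (by rw [hm]; ring) (by omega) (by omega)
    have v1 : hseq d (m-1) = 2 := by
      unfold hseq
      rw [if_neg (by omega), if_neg (by omega), if_neg (by omega), em1.1,
        if_neg (by omega), if_neg (by omega), if_pos rfl]
    have em2 := hseq_mod d (m-2) (3*d-2) (n-1) hd (by rw [hm]; ring) (by omega) (by omega)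
    have v2 : hseq d (m-2) = 3*d := by
      unfold hseq
      rw [if_neg (by omega), if_neg (by omega), if_neg (by omega), em2.1,
        if_neg (by omega), if_pos (by omega)]
    have emD := hseq_mod d (m - 3*d) 0 (n-1) hd (by omega) le_rfl (by omega)
    have vD : hseq d (m - 3*d) = hp d 0 (n-1) := by
      unfold hseq
      rw [if_neg (by omega), if_neg (by omega), if_neg (by omega), emD.1, emD.2,
        if_pos (by norm_num)]
      norm_num
    have h03 : (0:ℤ) / 3 = 0 := by norm_num
    rw [v1, v2, vD, h03, show (0:ℤ) - 1 = -1 by ring, hp_neg_one]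
  · -- r ≥ 3 case
    have hr3 : 3 ≤ r := by omega
    have em1 := hseq_mod d (m-1) (r-1) n hd (by rw [hm]; ring) (by omega) (by omega)
    have v1 : hseq d (m-1) = 3 := by
      unfold hseq
      rw [if_neg (by omega), if_neg (by omega), if_neg (by omega), em1.1,
        if_neg (by omega), if_neg (by omega), if_neg (by omega)]
    have em2 := hseq_mod d (m-2) (r-2) n hd (by rw [hm]; ring) (by omega) (by omega)
    have v2 : hseq d (m-2) = 3*d := by
      unfold hseq
      rw [if_neg (by omega), if_neg (by omega), if_neg (by omega), em2.1,
        if_neg (by omega), if_pos (by omega)]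
    have em3 := hseq_mod d (m-3) (r-3) n hd (by rw [hm]; ring) (by omega) (by omega)
    have v3 : hseq d (m-3) = hp d (r/3 - 1) n := by
      unfold hseq
      rw [if_neg (by omega), if_neg (by omega), if_neg (by omega), em3.1, em3.2,
        if_pos (by omega)]
      congr 1
      omega
    have emD := hseq_mod d (m - 3*d) r (n-1) hd hmD hr0 hr
    have vD : hseq d (m - 3*d) = hp d (r/3) (n-1) := by
      unfold hseq
      rw [if_neg (by omega), if_neg (by omega), if_neg (by omega), emD.1, emD.2,
        if_pos h3]
    rw [v1, v2, v3, vD]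
end

section
/- Fix d ≥ 1 and let (a_m) be the sequence of the main construction. For every m = 3dn + r > 3d + 2 with r ≡ 2 (mod 3), assuming all earlier terms take their claimed values, a_{m−a_{m−1}} + a_{m−a_{m−2}} equals 2 if r = 3d−1 and 3 otherwise (with a_j = 0 for j ≤ 0). -/
lemma pbinom_natCast (N j : ℕ) : pbinom (N : ℤ) j = (N.choose j : ℤ) := by
  by_cases h : j ≤ N
  · have hprod : ∏ i ∈ Finset.range j, ((N : ℤ) - i) = ((N.descFactorial j : ℕ) : ℤ) := by
      rw [Nat.descFactorial_eq_prod_range, Nat.cast_prod]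
      refine Finset.prod_congr rfl fun i hi => ?_
      have : i ≤ N := le_trans (le_of_lt (Finset.mem_range.mp hi)) h
      rw [Nat.cast_sub this]
    rw [pbinom, hprod, Nat.descFactorial_eq_factorial_mul_choose]
    push_cast
    rw [Int.mul_ediv_cancel_left]
    exact_mod_cast Nat.factorial_ne_zero j
  · push_neg at h
    have hz : ∏ i ∈ Finset.range j, ((N : ℤ) - i) = 0 :=
      Finset.prod_eq_zero (Finset.mem_range.mpr h) (by simp)
    rw [pbinom, hz, Int.zero_ediv, Nat.choose_eq_zero_of_lt h, Nat.cast_zero]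

lemma pbinom_nonneg {x : ℤ} (hx : 0 ≤ x) (j : ℕ) : 0 ≤ pbinom x j := by
  have : x = (x.toNat : ℤ) := (Int.toNat_of_nonneg hx).symm
  rw [this, pbinom_natCast]
  exact Int.natCast_nonneg _

lemma choose_add_ge (n K : ℕ) : n ≤ (n + K).choose (K + 1) := by
  induction K with
  | zero => simp [Nat.choose_one_right]
  | succ K ih =>
      have h : (n + (K + 1)).choose (K + 1 + 1)
          = (n + K).choose (K + 1) + (n + K).choose (K + 1 + 1) := Nat.choose_succ_succ _ _
      omega

lemma hp_ge (d k n : ℤ) (hd : 1 ≤ d) (hk : 1 ≤ k) (hn : 1 ≤ n) :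
    3 * d * n + 3 * k + 2 ≤ hp d k n := by
  set K := k.toNat with hK
  have hkK : (K : ℤ) = k := Int.toNat_of_nonneg (by omega)
  have hK1 : 1 ≤ K := by omega
  have h1k : (1 + k).toNat = K + 1 := by omega
  -- first term
  have h1 : 3 * d * n ≤ 3 * d * pbinom (n + k) (1 + k).toNat := by
    have hcast : n + k = ((n.toNat + K : ℕ) : ℤ) := by push_cast; omega
    rw [h1k, hcast, pbinom_natCast]
    have := choose_add_ge n.toNat K
    have hch : n ≤ ((n.toNat + K).choose (K + 1) : ℤ) := by
      calc n = (n.toNat : ℤ) := by omega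
        _ ≤ _ := by exact_mod_cast this
    nlinarith
  -- sum term
  have h2 : (3 * (K : ℤ) + 2) ≤
      ∑ i ∈ Finset.Icc 1 K, (3 * (i : ℤ) + 2) * pbinom (n - 1 + k - (i : ℤ)) (K - i) := by
    have := Finset.single_le_sum
      (f := fun i : ℕ => (3 * (i : ℤ) + 2) * pbinom (n - 1 + k - (i : ℤ)) (K - i))
      (fun i hi => by
        have hi' := Finset.mem_Icc.mp hi
        have : (0:ℤ) ≤ n - 1 + k - (i : ℤ) := by omega
        exact mul_nonneg (by positivity) (pbinom_nonneg this _))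
      (Finset.mem_Icc.mpr ⟨hK1, le_refl K⟩)
    calc (3 * (K : ℤ) + 2) = (3 * (K : ℤ) + 2) * pbinom (n - 1 + k - (K : ℤ)) (K - K) := by
          simp [pbinom_zero]
      _ ≤ _ := this
  rw [hp]
  have : (3:ℤ) * k + 2 = 3 * (K:ℤ) + 2 := by omega
  linarith

theorem hseq_case_two (d : ℤ) (hd : 1 ≤ d) (n r m : ℤ) (hr0 : 0 ≤ r) (hr : r < 3 * d)
    (hm : m = 3 * d * n + r) (hbig : 3 * d + 2 < m) (h3 : r % 3 = 2) :
    hseq d (m - hseq d (m - 1)) + hseq d (m - hseq d (m - 2))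
      = if r = 3 * d - 1 then 2 else 3 := by
  have hD : (0:ℤ) < 3 * d := by linarith
  have hr2 : 2 ≤ r := by omega
  have hn1 : 1 ≤ n := by nlinarith
  -- helper to compute mod and div
  have key : ∀ n' s : ℤ, 0 ≤ s → s < 3 * d → (3 * d * n' + s) % (3 * d) = s ∧
      (3 * d * n' + s) / (3 * d) = n' := by
    intro n' s hs0 hs
    constructor
    · rw [add_comm, Int.add_mul_emod_self_left, Int.emod_eq_of_lt hs0 hs]
    · rw [add_comm, Int.add_mul_ediv_left _ _ (by omega : (3:ℤ)*d ≠ 0),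
        Int.ediv_eq_zero_of_lt hs0 hs, zero_add]
  -- a_{m-1} = 3d
  have ha1 : hseq d (m - 1) = 3 * d := by
    have h := key n (r - 1) (by omega) (by omega)
    have e : m - 1 = 3 * d * n + (r - 1) := by omega
    rw [hseq, e, if_neg (by omega), if_neg (by omega), if_neg (by omega), h.1,
      if_neg (by omega), if_pos (by omega)]
  -- a_{m-2} = hp d ((r-2)/3) n
  have ha2 : hseq d (m - 2) = hp d ((r - 2) / 3) n := by
    have h := key n (r - 2) (by omega) (by omega)
    have e : m - 2 = 3 * d * n + (r - 2) := by omega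
    rw [hseq, e, if_neg (by omega), if_neg (by omega), if_neg (by omega), h.1, h.2,
      if_pos (by omega)]
  -- a_{m - 3d}
  have ha3 : hseq d (m - 3 * d) = if r = 3 * d - 1 then 2 else 3 := by
    have h := key (n - 1) r hr0 hr
    have e : m - 3 * d = 3 * d * (n - 1) + r := by rw [hm]; ring
    rw [hseq, e, if_neg (by omega), if_neg (by omega), if_neg (by omega), h.1,
      if_neg (by omega), if_neg (by omega)]
  -- second summand is 0
  have ha4 : hseq d (m - hp d ((r - 2) / 3) n) = 0 := by
    rcases eq_or_lt_of_le hr2 with h2 | h5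
    · have : (r - 2) / 3 = 0 := by omega
      rw [this, hp_zero]
      have : m - 3 * d * n = 2 := by omega
      rw [this, hseq, if_neg (by omega), if_neg (by omega), if_pos rfl]
    · have hk1 : 1 ≤ (r - 2) / 3 := by omega
      have hge := hp_ge d ((r - 2) / 3) n hd hk1 hn1
      have : m - hp d ((r - 2) / 3) n ≤ 0 := by
        have : 3 * ((r - 2) / 3) + 2 = r := by omega
        omega
      rw [hseq, if_pos this]
  rw [ha1, ha2, ha3, ha4, add_zero]
end
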